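/- Let G be a cyclic group of order N, generated by g, and m, N_p integers with N_p dividing N, N_p > 1, and n = N/N_p. Writing ζ = ξ(g) for a generator ξ of the character group, the sum M = -(1/N)·∑_{k=m}^{N-1+m} r(k-m)·ζ^k, where r(x) denotes the residue of x modulo N_p in {0,...,N_p-1}, equals -(ζ^m/N)·(∑_{i=0}^{N_p-1} i ζ^i)·(∑_{ℓ=0}^{n-1} ζ^{N_p ℓ}). In particular, M = 0 when n > 1, and M = ζ^m/(1-ζ) when n = 1. -/

import Mathlib

/-!
Factor `ζ ^ m` out and split `j < Np * n` as `j = Np * ℓ + i` with `i < Np`: since `r(j) = i`,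
the sum is the product of `∑ i ζ^i` over one period and the geometric sum `∑ (ζ ^ Np) ^ ℓ`.
As `ζ ^ Np` is a primitive `n`-th root of unity, the geometric factor vanishes for `n > 1`.
For `n = 1`, multiplying `∑_{i<N} i ζ^i` by `1 - ζ` telescopes to `-N` because `ζ ^ N = 1`
and `∑_{i<N} ζ^i = 0`.
-/

open Finset

theorem Finset.sum_range_mul_mod_mul_pow {R : Type*} [CommSemiring R] (x : R) (p n : ℕ) :
    ∑ j ∈ range (p * n), ((j % p : ℕ) : R) * x ^ j
      = (∑ i ∈ range p, (i : R) * x ^ i) * ∑ ℓ ∈ range n, x ^ (p * ℓ) := by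
  induction n with
  | zero => simp
  | succ n ih =>
    have hblock : ∑ i ∈ range p, ((p * n + i) % p : ℕ) * x ^ (p * n + i)
        = x ^ (p * n) * ∑ i ∈ range p, (i : R) * x ^ i := by
      rw [mul_sum]
      refine sum_congr rfl fun i hi ↦ ?_
      rw [Nat.mul_add_mod_self_left, Nat.mod_eq_of_lt (mem_range.mp hi), pow_add, mul_left_comm]
    rw [Nat.mul_succ, sum_range_add, ih, hblock, sum_range_succ]
    ring

theorem Finset.mul_one_sub_sum_range_nat_mul_pow {R : Type*} [CommRing R] (x : R) (k : ℕ) :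
    (1 - x) * ∑ i ∈ range k, (i : R) * x ^ i
      = ∑ i ∈ range k, x ^ i - 1 - (k : R) * x ^ k + x ^ k := by
  induction k with
  | zero => simp
  | succ k ih =>
    rw [sum_range_succ, sum_range_succ (fun i ↦ x ^ i), mul_add, ih]
    push_cast
    ring

theorem IsPrimitiveRoot.sum_range_nat_mul_pow {K : Type*} [Field K] {ζ : K} {N : ℕ}
    (hζ : IsPrimitiveRoot ζ N) (hN : 1 < N) :
    ∑ i ∈ range N, (i : K) * ζ ^ i = -N / (1 - ζ) := by
  have h1ζ : 1 - ζ ≠ 0 := sub_ne_zero.mpr (hζ.ne_one hN).symm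
  rw [eq_div_iff h1ζ, mul_comm, mul_one_sub_sum_range_nat_mul_pow, hζ.geom_sum_eq_zero hN,
    hζ.pow_eq_one]
  ring

theorem lefschetz_local_term_general (N Np : ℕ) (hN : 2 ≤ N)
    (hdvd : Np ∣ N) (n : ℕ) (hn : n = N / Np) (m : ℤ)
    (ζ : ℂ) (hζ : ζ = Complex.exp (2 * Real.pi * Complex.I / N))
    (M : ℂ)
    (hM : M = -(1 / (N : ℂ)) * ∑ j ∈ Finset.range N, ((j % Np : ℕ) : ℂ) * ζ ^ (m + j)) :
    M = -(ζ ^ m / (N : ℂ)) * (∑ i ∈ Finset.range Np, (i : ℂ) * ζ ^ i) *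
          (∑ ℓ ∈ Finset.range n, ζ ^ (Np * ℓ)) ∧
      (1 < n → M = 0) ∧ (n = 1 → M = ζ ^ m / (1 - ζ)) := by
  have hprim : IsPrimitiveRoot ζ N := hζ ▸ Complex.isPrimitiveRoot_exp N (by omega)
  have hNmul : N = Np * n := by rw [hn, Nat.mul_div_cancel' hdvd]
  have hfactor : M = -(ζ ^ m / (N : ℂ)) * (∑ i ∈ range Np, (i : ℂ) * ζ ^ i) *
      (∑ ℓ ∈ range n, ζ ^ (Np * ℓ)) := by
    simp_rw [hM, zpow_add₀ (hprim.ne_zero (by omega)), zpow_natCast, mul_left_comm _ (ζ ^ m),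
      ← mul_sum, hNmul, sum_range_mul_mod_mul_pow]
    ring
  refine ⟨hfactor, fun hn1 ↦ ?_, fun hn1 ↦ ?_⟩
  · have hgeom : ∑ ℓ ∈ range n, ζ ^ (Np * ℓ) = 0 := by
      simp_rw [pow_mul]
      exact (hprim.pow (by omega) hNmul).geom_sum_eq_zero hn1
    rw [hfactor, hgeom, mul_zero]
  · obtain rfl : N = Np := by rw [hNmul, hn1, mul_one]
    have hN0 : (N : ℂ) ≠ 0 := by exact_mod_cast (show N ≠ 0 by omega)
    have h1ζ : 1 - ζ ≠ 0 := sub_ne_zero.mpr (hprim.ne_one (by omega)).symm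
    rw [hfactor, hprim.sum_range_nat_mul_pow (by omega), hn1]
    simp only [range_one, sum_singleton, mul_zero, pow_zero]
    field_simp

/-- With `ζ = exp(2πi/N)`, `Np ∣ N`, `Np > 1`, `n = N/Np`:
`M = -(1/N)·∑_{k=m}^{N-1+m} r(k-m)·ζ^k` factors as
`-(ζ^m/N)·(∑_{i<Np} i ζ^i)·(∑_{ℓ<n} ζ^{Np ℓ})`; it is `0` when `n > 1` and
`ζ^m/(1-ζ)` when `n = 1`.  Here `r(x) = x % Np ∈ {0,…,Np-1}`. -/
theorem lefschetz_local_term (N Np : ℕ) (hN : 2 ≤ N) (hNp : 1 < Np)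
    (hdvd : Np ∣ N) (n : ℕ) (hn : n = N / Np) (m : ℤ)
    (ζ : ℂ) (hζ : ζ = Complex.exp (2 * Real.pi * Complex.I / N))
    (M : ℂ)
    (hM : M = -(1 / (N : ℂ)) * ∑ j ∈ Finset.range N, ((j % Np : ℕ) : ℂ) * ζ ^ (m + j)) :
    M = -(ζ ^ m / (N : ℂ)) * (∑ i ∈ Finset.range Np, (i : ℂ) * ζ ^ i) *
          (∑ ℓ ∈ Finset.range n, ζ ^ (Np * ℓ)) ∧
      (1 < n → M = 0) ∧ (n = 1 → M = ζ ^ m / (1 - ζ)) :=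
  lefschetz_local_term_general N Np hN hdvd n hn m ζ hζ M hM
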